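/- arXiv:2204.05527 — 4 statements merged into one kernel-verified Lean document; each statement's English description precedes it below -/
import Mathlib

section
/- The function δ ↦ δ·Φ(−δ) on [0, ∞) attains its maximum at a unique point δ* > 0, where Φ denotes the standard normal cumulative distribution function. Moreover δ* satisfies the first-order condition Φ(−δ*) = δ*·φ(δ*), where φ(x) = (2π)^{−1/2} e^{−x²/2} is the standard normal density. -/
/-!
Write `f δ = δ Φ(-δ)`. Its derivative is `g δ = Φ(-δ) - δ φ(δ)`, and `g' δ = (δ² - 2) φ(δ)`, so
`g` is strictly decreasing on `[0, √2]`. Since `g 0 = Φ 0 > 0`, while the Mills-ratio bound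
`δ Φ(-δ) ≤ φ(δ)` gives `g δ ≤ φ(δ) (1 - δ²) / δ < 0` for `δ > 1`, the derivative `g` changes
sign exactly once on `[0, ∞)`, at some `δ* ∈ (0, √2)`. Hence `f` increases strictly up to `δ*` and
decreases strictly afterwards, so `δ*` is the unique maximiser, and `g δ* = 0` is the first-order
condition.
-/

/-- The standard normal cumulative distribution function
`Φ(x) = ∫_{−∞}^{x} (2π)^{−1/2} e^{−t²/2} dt`. -/
noncomputable def stdNormalCDF (x : ℝ) : ℝ :=
  ∫ t in Set.Iic x, (Real.sqrt (2 * Real.pi))⁻¹ * Real.exp (-(t ^ 2) / 2)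

/-- The standard normal density `φ(x) = (2π)^{−1/2} e^{−x²/2}`. -/
noncomputable def stdNormalPDF (x : ℝ) : ℝ :=
  (Real.sqrt (2 * Real.pi))⁻¹ * Real.exp (-(x ^ 2) / 2)

open Real MeasureTheory Set Filter Topology

section Unimodal

variable {α β : Type*} [LinearOrder α] [Preorder β] {f : α → β} {a d : α}

theorem StrictMonoOn.isMaxOn_Ici (hmono : StrictMonoOn f (Icc a d))
    (hanti : StrictAntiOn f (Ici d)) (had : a ≤ d) : IsMaxOn f (Ici a) d := by
  intro x hx
  rcases le_total x d with hxd | hdx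
  · exact hmono.monotoneOn ⟨hx, hxd⟩ ⟨had, le_rfl⟩ hxd
  · exact hanti.antitoneOn self_mem_Ici hdx hdx

theorem StrictMonoOn.eq_of_isMaxOn_Ici (hmono : StrictMonoOn f (Icc a d))
    (hanti : StrictAntiOn f (Ici d)) (had : a ≤ d) {d' : α} (hd' : d' ∈ Ici a)
    (hmax : IsMaxOn f (Ici a) d') : d' = d := by
  have hle : f d ≤ f d' := hmax (show d ∈ Ici a from had)
  by_contra hne
  rcases lt_or_gt_of_ne hne with hlt | hgt
  · exact (hmono ⟨hd', hlt.le⟩ ⟨had, le_rfl⟩ hlt).not_ge hle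
  · exact (hanti self_mem_Ici hgt.le hgt).not_ge hle

end Unimodal

theorem exists_sign_change_of_strictAntiOn {g : ℝ → ℝ} {a b : ℝ} (hab : a ≤ b)
    (hcont : ContinuousOn g (Icc a b)) (hanti : StrictAntiOn g (Icc a b)) (ha : 0 < g a)
    (hb : ∀ x, b ≤ x → g x < 0) :
    ∃ d ∈ Ioo a b, g d = 0 ∧ (∀ x ∈ Ico a d, 0 < g x) ∧ ∀ x, d < x → g x < 0 := by
  obtain ⟨d, hd, hgd⟩ := intermediate_value_Icc' hab hcont ⟨(hb b le_rfl).le, ha.le⟩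
  have had : a < d := hd.1.lt_of_ne (by rintro rfl; exact ha.ne' hgd)
  have hdb : d < b := hd.2.lt_of_ne (by rintro rfl; exact (hb d le_rfl).ne hgd)
  refine ⟨d, ⟨had, hdb⟩, hgd, fun x hx => ?_, fun x hx => ?_⟩
  · exact hgd ▸ hanti ⟨hx.1, hx.2.le.trans hd.2⟩ hd hx.2
  · rcases le_or_gt x b with hxb | hbx
    · exact hgd ▸ hanti hd ⟨had.le.trans hx.le, hxb⟩ hx
    · exact hb x hbx.le

theorem stdNormalPDF_pos (x : ℝ) : 0 < stdNormalPDF x := by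
  unfold stdNormalPDF
  have : 0 < √(2 * π) := sqrt_pos.mpr (by positivity)
  positivity

theorem stdNormalPDF_neg (x : ℝ) : stdNormalPDF (-x) = stdNormalPDF x := by
  simp only [stdNormalPDF, neg_sq]

theorem continuous_stdNormalPDF : Continuous stdNormalPDF := by
  unfold stdNormalPDF
  fun_prop

theorem integrable_stdNormalPDF : Integrable stdNormalPDF := by
  convert (integrable_exp_neg_mul_sq (by norm_num : (0 : ℝ) < 1 / 2)).const_mul
    (√(2 * π))⁻¹ using 2 with x
  unfold stdNormalPDF
  ring_nf

theorem integrable_mul_stdNormalPDF : Integrable fun t => t * stdNormalPDF t := by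
  convert (integrable_mul_exp_neg_mul_sq (by norm_num : (0 : ℝ) < 1 / 2)).const_mul
    (√(2 * π))⁻¹ using 2 with t
  unfold stdNormalPDF
  ring_nf

theorem hasDerivAt_stdNormalPDF (x : ℝ) :
    HasDerivAt stdNormalPDF (-x * stdNormalPDF x) x := by
  have hexp : HasDerivAt (fun x : ℝ => -(x ^ 2) / 2) (-x) x := by
    simpa using ((hasDerivAt_pow 2 x).neg.div_const 2).congr_deriv (by ring)
  exact (hexp.exp.const_mul (√(2 * π))⁻¹).congr_deriv (by unfold stdNormalPDF; ring)

theorem tendsto_stdNormalPDF_atTop : Tendsto stdNormalPDF atTop (𝓝 0) := by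
  have hexp : Tendsto (fun x : ℝ => -(x ^ 2) / 2) atTop atBot :=
    (tendsto_neg_atBot_iff.mpr (tendsto_pow_atTop two_ne_zero)).atBot_div_const two_pos
  have h := (tendsto_exp_atBot.comp hexp).const_mul (√(2 * π))⁻¹
  rw [mul_zero] at h
  exact h

theorem stdNormalCDF_eq_integral (x : ℝ) : stdNormalCDF x = ∫ t in Iic x, stdNormalPDF t := rfl

theorem stdNormalCDF_neg_eq_integral (x : ℝ) :
    stdNormalCDF (-x) = ∫ t in Ioi x, stdNormalPDF t := by
  rw [stdNormalCDF_eq_integral, ← integral_comp_neg_Ioi]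
  simp_rw [stdNormalPDF_neg]

theorem stdNormalCDF_pos (x : ℝ) : 0 < stdNormalCDF x := by
  have hsupp : Function.support stdNormalPDF = univ :=
    eq_univ_of_forall fun t => (stdNormalPDF_pos t).ne'
  rw [stdNormalCDF_eq_integral, setIntegral_pos_iff_support_of_nonneg_ae
    (.of_forall fun t => (stdNormalPDF_pos t).le) integrable_stdNormalPDF.integrableOn]
  simp [hsupp]

theorem hasDerivAt_stdNormalCDF (x : ℝ) : HasDerivAt stdNormalCDF (stdNormalPDF x) x := by
  have hcdf : stdNormalCDF = fun y => stdNormalCDF 0 + ∫ t in (0 : ℝ)..y, stdNormalPDF t := by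
    ext y
    rw [← intervalIntegral.integral_Iic_sub_Iic integrable_stdNormalPDF.integrableOn
      integrable_stdNormalPDF.integrableOn, stdNormalCDF_eq_integral, stdNormalCDF_eq_integral]
    ring
  rw [hcdf]
  exact (intervalIntegral.integral_hasDerivAt_right integrable_stdNormalPDF.intervalIntegrable
    continuous_stdNormalPDF.stronglyMeasurable.stronglyMeasurableAtFilter
    continuous_stdNormalPDF.continuousAt).const_add _

theorem hasDerivAt_stdNormalCDF_neg (x : ℝ) :
    HasDerivAt (fun x => stdNormalCDF (-x)) (-stdNormalPDF x) x := by
  have h := (hasDerivAt_stdNormalCDF (-x)).comp x (hasDerivAt_neg x)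
  rwa [stdNormalPDF_neg, mul_neg_one] at h

theorem integral_Ioi_mul_stdNormalPDF (x : ℝ) :
    ∫ t in Ioi x, t * stdNormalPDF t = stdNormalPDF x := by
  have hderiv : ∀ t ∈ Ici x, HasDerivAt (fun t => -stdNormalPDF t) (t * stdNormalPDF t) t :=
    fun t _ => (hasDerivAt_stdNormalPDF t).neg.congr_deriv (by ring)
  rw [integral_Ioi_of_hasDerivAt_of_tendsto' hderiv integrable_mul_stdNormalPDF.integrableOn
    (by simpa using tendsto_stdNormalPDF_atTop.neg)]
  ring

-- The Mills-ratio bound: integrate `x φ(t) ≤ t φ(t)` over the tail `t > x`.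
theorem mul_stdNormalCDF_neg_le_stdNormalPDF (x : ℝ) :
    x * stdNormalCDF (-x) ≤ stdNormalPDF x := by
  rw [stdNormalCDF_neg_eq_integral, ← integral_const_mul, ← integral_Ioi_mul_stdNormalPDF x]
  exact setIntegral_mono_on (integrable_stdNormalPDF.integrableOn.const_mul x)
    integrable_mul_stdNormalPDF.integrableOn measurableSet_Ioi
    fun t ht => mul_le_mul_of_nonneg_right (le_of_lt ht) (stdNormalPDF_pos t).le

theorem hasDerivAt_mul_stdNormalCDF_neg (x : ℝ) :
    HasDerivAt (fun x => x * stdNormalCDF (-x)) (stdNormalCDF (-x) - x * stdNormalPDF x) x :=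
  ((hasDerivAt_id x).mul (hasDerivAt_stdNormalCDF_neg x)).congr_deriv (by simp only [id]; ring)

theorem hasDerivAt_stdNormalCDF_neg_sub_mul_stdNormalPDF (x : ℝ) :
    HasDerivAt (fun x => stdNormalCDF (-x) - x * stdNormalPDF x)
      ((x ^ 2 - 2) * stdNormalPDF x) x :=
  ((hasDerivAt_stdNormalCDF_neg x).sub
    ((hasDerivAt_id x).mul (hasDerivAt_stdNormalPDF x))).congr_deriv (by simp only [id]; ring)

theorem continuous_mul_stdNormalCDF_neg : Continuous fun x => x * stdNormalCDF (-x) :=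
  continuous_iff_continuousAt.mpr fun x => (hasDerivAt_mul_stdNormalCDF_neg x).continuousAt

theorem continuous_stdNormalCDF_neg_sub_mul_stdNormalPDF :
    Continuous fun x => stdNormalCDF (-x) - x * stdNormalPDF x :=
  continuous_iff_continuousAt.mpr fun x =>
    (hasDerivAt_stdNormalCDF_neg_sub_mul_stdNormalPDF x).continuousAt

theorem strictAntiOn_stdNormalCDF_neg_sub_mul_stdNormalPDF :
    StrictAntiOn (fun x => stdNormalCDF (-x) - x * stdNormalPDF x) (Icc (-√2) √2) := by
  refine strictAntiOn_of_deriv_neg (convex_Icc _ _)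
    continuous_stdNormalCDF_neg_sub_mul_stdNormalPDF.continuousOn fun x hx => ?_
  rw [interior_Icc] at hx
  rw [(hasDerivAt_stdNormalCDF_neg_sub_mul_stdNormalPDF x).deriv]
  have hx2 : x ^ 2 < 2 := sq_lt.mpr hx
  exact mul_neg_of_neg_of_pos (by linarith) (stdNormalPDF_pos x)

theorem stdNormalCDF_neg_sub_mul_stdNormalPDF_neg {x : ℝ} (hx : 1 < x) :
    stdNormalCDF (-x) - x * stdNormalPDF x < 0 := by
  refine neg_of_mul_neg_right ?_ (zero_le_one.trans hx.le)
  nlinarith [mul_stdNormalCDF_neg_le_stdNormalPDF x,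
    mul_pos (by nlinarith : (0 : ℝ) < x ^ 2 - 1) (stdNormalPDF_pos x)]

/-- The function `δ ↦ δ·Φ(−δ)` on `[0, ∞)` attains its maximum at a unique point `δ* > 0`,
which satisfies the first-order condition `Φ(−δ*) = δ*·φ(δ*)`. -/
theorem exists_unique_argmax_mul_stdNormalCDF_neg :
    ∃ d : ℝ, 0 < d ∧
      IsMaxOn (fun δ : ℝ => δ * stdNormalCDF (-δ)) (Set.Ici 0) d ∧
      stdNormalCDF (-d) = d * stdNormalPDF d ∧
      ∀ d' ∈ Set.Ici (0 : ℝ),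
        IsMaxOn (fun δ : ℝ => δ * stdNormalCDF (-δ)) (Set.Ici 0) d' → d' = d := by
  have hone : 1 < √2 := by rw [lt_sqrt zero_le_one]; norm_num
  obtain ⟨d, ⟨hd0, -⟩, hcrit, hpos, hneg⟩ :=
    exists_sign_change_of_strictAntiOn (sqrt_nonneg 2)
      continuous_stdNormalCDF_neg_sub_mul_stdNormalPDF.continuousOn
      (strictAntiOn_stdNormalCDF_neg_sub_mul_stdNormalPDF.mono
        (Icc_subset_Icc (neg_nonpos.mpr (sqrt_nonneg 2)) le_rfl))
      (by simpa using stdNormalCDF_pos 0)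
      fun x hx => stdNormalCDF_neg_sub_mul_stdNormalPDF_neg (hone.trans_le hx)
  have hmono : StrictMonoOn (fun δ : ℝ => δ * stdNormalCDF (-δ)) (Icc 0 d) := by
    refine strictMonoOn_of_deriv_pos (convex_Icc 0 d)
      continuous_mul_stdNormalCDF_neg.continuousOn fun x hx => ?_
    rw [interior_Icc] at hx
    rw [(hasDerivAt_mul_stdNormalCDF_neg x).deriv]
    exact hpos x ⟨hx.1.le, hx.2⟩
  have hanti : StrictAntiOn (fun δ : ℝ => δ * stdNormalCDF (-δ)) (Ici d) := by
    refine strictAntiOn_of_deriv_neg (convex_Ici d)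
      continuous_mul_stdNormalCDF_neg.continuousOn fun x hx => ?_
    rw [interior_Ici] at hx
    rw [(hasDerivAt_mul_stdNormalCDF_neg x).deriv]
    exact hneg x hx
  exact ⟨d, hd0, hmono.isMaxOn_Ici hanti hd0.le, sub_eq_zero.mp hcrit,
    fun d' hd' hmax => hmono.eq_of_isMaxOn_Ici hanti hd0.le hd' hmax⟩
end

section
/- Let σ₁, σ₀ > 0, c ∈ ℝ, and γ ∈ [0,1] with γ/σ₁ < (1−γ)/σ₀. Then the supremum over pairs (μ₁, μ₀) with μ₀ > μ₁ of (μ₀ − μ₁)·Φ(−c − μ₀·(1−γ)/σ₀ + μ₁·γ/σ₁) is +∞, where Φ is the standard normal cumulative distribution function. Consequently any minimax-optimal sampling fraction γ must satisfy γ ≥ σ₁/(σ₁ + σ₀). -/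
lemma gauss_integrable :
    MeasureTheory.Integrable (fun t : ℝ => (Real.sqrt (2 * Real.pi))⁻¹ * Real.exp (-(t ^ 2) / 2)) := by
  have h := (integrable_exp_neg_mul_sq (by norm_num : (0:ℝ) < 1/2)).const_mul
    (Real.sqrt (2 * Real.pi))⁻¹
  convert h using 2 with t
  ring_nf

lemma gauss_pos (t : ℝ) : 0 < (Real.sqrt (2 * Real.pi))⁻¹ * Real.exp (-(t ^ 2) / 2) := by
  positivity

lemma cdf_mono {x y : ℝ} (hxy : x ≤ y) : stdNormalCDF x ≤ stdNormalCDF y := by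
  unfold stdNormalCDF
  apply MeasureTheory.setIntegral_mono_set gauss_integrable.integrableOn
  · exact Filter.Eventually.of_forall fun t => (gauss_pos t).le
  · exact Filter.Eventually.of_forall (Set.Iic_subset_Iic.mpr hxy)

lemma cdf0_pos : 0 < stdNormalCDF 0 := by
  unfold stdNormalCDF
  rw [MeasureTheory.setIntegral_pos_iff_support_of_nonneg_ae
    (Filter.Eventually.of_forall fun t => (gauss_pos t).le) gauss_integrable.integrableOn]
  have : Function.support (fun t : ℝ => (Real.sqrt (2 * Real.pi))⁻¹ * Real.exp (-(t ^ 2) / 2)) = Set.univ := by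
    ext t; simpa [Function.mem_support] using (gauss_pos t).ne'
  rw [this, Set.univ_inter]
  simp [Real.volume_Iic]

lemma main_unbdd (σ₁ σ₀ c γ : ℝ) (hσ₁ : 0 < σ₁) (hσ₀ : 0 < σ₀) (hγ0 : 0 ≤ γ)
    (h : γ / σ₁ < (1 - γ) / σ₀) :
    ¬ BddAbove {r : ℝ | ∃ μ₁ μ₀ : ℝ, μ₁ < μ₀ ∧
        r = (μ₀ - μ₁) * stdNormalCDF (-c - μ₀ * (1 - γ) / σ₀ + μ₁ * γ / σ₁)} := by
  rintro ⟨M, hM⟩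
  have hb0 : 0 ≤ γ / σ₁ := div_nonneg hγ0 hσ₁.le
  have hab : 0 < (1 - γ) / σ₀ - γ / σ₁ := sub_pos.mpr h
  set b := γ / σ₁ with hb
  set a := (1 - γ) / σ₀ with ha
  set s := (b + 1) / (a - b) with hs
  have hK0 : 0 < stdNormalCDF 0 := cdf0_pos
  set K := stdNormalCDF 0 with hK
  set t := max (max c 1) ((M + 1) / K) with ht
  have ht1 : (1:ℝ) ≤ t := le_trans (le_max_right c 1) (le_max_left _ _)
  have htc : c ≤ t := le_trans (le_max_left c 1) (le_max_left _ _)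
  have htM : (M + 1) / K ≤ t := le_max_right _ _
  have htpos : 0 < t := lt_of_lt_of_le one_pos ht1
  have hsab : s * (a - b) = b + 1 := div_mul_cancel₀ _ hab.ne'
  have e1 : (-s * t) - (-(s + 1) * t) = t := by ring
  have e2 : -c - (-s * t) * (1 - γ) / σ₀ + (-(s + 1) * t) * γ / σ₁ = t - c := by
    rw [show (-s * t) * (1 - γ) / σ₀ = (-s * t) * a from by rw [mul_div_assoc],
        show (-(s + 1) * t) * γ / σ₁ = (-(s + 1) * t) * b from by rw [mul_div_assoc]]
    linear_combination t * hsab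
  have hmem : t * stdNormalCDF (t - c) ≤ M := by
    apply hM
    refine ⟨-(s + 1) * t, -s * t, by nlinarith, ?_⟩
    rw [e1, e2]
  have h1 : stdNormalCDF 0 ≤ stdNormalCDF (t - c) := cdf_mono (by linarith)
  have h2 : t * K ≤ t * stdNormalCDF (t - c) :=
    mul_le_mul_of_nonneg_left h1 htpos.le
  have h3 : M + 1 ≤ t * K := by
    rw [div_le_iff₀ hK0] at htM
    linarith
  linarith

/-- If `γ/σ₁ < (1−γ)/σ₀`, the supremum over pairs `μ₀ > μ₁` of
`(μ₀ − μ₁)·Φ(−c − μ₀(1−γ)/σ₀ + μ₁γ/σ₁)` is `+∞` (the set of such regret values is unbounded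
above). Consequently any sampling fraction `γ'` with finite worst-case regret (for some
threshold `c'`) must satisfy `γ' ≥ σ₁/(σ₁ + σ₀)`. -/
theorem unbounded_regret_if_undersampling (σ₁ σ₀ c γ : ℝ)
    (hσ₁ : 0 < σ₁) (hσ₀ : 0 < σ₀) (hγ : γ ∈ Set.Icc (0 : ℝ) 1)
    (h : γ / σ₁ < (1 - γ) / σ₀) :
    ¬ BddAbove {r : ℝ | ∃ μ₁ μ₀ : ℝ, μ₁ < μ₀ ∧
        r = (μ₀ - μ₁) * stdNormalCDF (-c - μ₀ * (1 - γ) / σ₀ + μ₁ * γ / σ₁)} ∧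
    ∀ γ' ∈ Set.Icc (0 : ℝ) 1,
      (∃ c' : ℝ, BddAbove {r : ℝ | ∃ μ₁ μ₀ : ℝ, μ₁ < μ₀ ∧
          r = (μ₀ - μ₁) * stdNormalCDF (-c' - μ₀ * (1 - γ') / σ₀ + μ₁ * γ' / σ₁)}) →
      σ₁ / (σ₁ + σ₀) ≤ γ' := by
  constructor
  · exact main_unbdd σ₁ σ₀ c γ hσ₁ hσ₀ hγ.1 h
  · rintro γ' hγ' ⟨c', hbdd⟩
    by_contra hlt
    push_neg at hlt
    refine main_unbdd σ₁ σ₀ c' γ' hσ₁ hσ₀ hγ'.1 ?_ hbdd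
    rw [div_lt_div_iff₀ hσ₁ hσ₀]
    have hsum : 0 < σ₁ + σ₀ := by linarith
    rw [lt_div_iff₀ hsum] at hlt
    nlinarith
end

section
/- Let σ₁, σ₀ > 0 and set γ* = σ₁/(σ₁ + σ₀). For any μ₁, μ₀ ∈ ℝ, μ₁·γ*/σ₁ − μ₀·(1−γ*)/σ₀ = (μ₁ − μ₀)/(σ₁ + σ₀). Consequently, for every c ∈ ℝ, the worst-case regret R^max(γ*, c) := sup_{(μ₁,μ₀)} R(γ*, c, μ₁, μ₀) equals max{ sup_{δ>0} δ·Φ(c − δ/(σ₁+σ₀)), sup_{δ>0} δ·Φ(−c − δ/(σ₁+σ₀)) }, where R(γ, c, μ₁, μ₀) := (μ₁−μ₀)·Φ(c − {μ₁γ/σ₁ − μ₀(1−γ)/σ₀}) if μ₁ ≥ μ₀ and (μ₀−μ₁)·Φ(−c + {μ₁γ/σ₁ − μ₀(1−γ)/σ₀}) if μ₀ > μ₁. -/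
/-- Expected regret `R(γ, c, μ₁, μ₀)` of the constant sampling rule `γ` with threshold
implementation rule `1{x₁(1)/σ₁ − x₀(1)/σ₀ ≥ c}` in the reduced static two-arm problem. -/
noncomputable def regret (σ₁ σ₀ γ c μ₁ μ₀ : ℝ) : ℝ :=
  if μ₀ ≤ μ₁ then
    (μ₁ - μ₀) * stdNormalCDF (c - (μ₁ * γ / σ₁ - μ₀ * (1 - γ) / σ₀))
  else
    (μ₀ - μ₁) * stdNormalCDF (-c + (μ₁ * γ / σ₁ - μ₀ * (1 - γ) / σ₀))

/-! With the Neyman allocation the drift of the threshold statistic is `(μ₁ − μ₀)/(σ₁ + σ₀)`,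
so the regret depends on `(μ₁, μ₀)` only through the gap `δ = |μ₁ − μ₀|` and the sign of
`μ₁ − μ₀`: the set of attainable regrets is `{0} ∪ {δΦ(c − δ/(σ₁+σ₀))} ∪ {δΦ(−c − δ/(σ₁+σ₀))}`
over `δ > 0`. Both families are bounded above thanks to the Chernoff bound `Φ(x) ≤ C eˣ`, which
beats the linear factor `δ`, and their suprema are nonnegative, so the point `0` does not change
the supremum. -/

open MeasureTheory Real Set

lemma neyman_drift {σ₁ σ₀ : ℝ} (h₁ : σ₁ ≠ 0) (h₀ : σ₀ ≠ 0) (h : σ₁ + σ₀ ≠ 0) (μ₁ μ₀ : ℝ) :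
    μ₁ * (σ₁ / (σ₁ + σ₀)) / σ₁ - μ₀ * (1 - σ₁ / (σ₁ + σ₀)) / σ₀ = (μ₁ - μ₀) / (σ₁ + σ₀) := by
  field_simp
  ring

lemma regret_neyman {σ₁ σ₀ : ℝ} (h₁ : σ₁ ≠ 0) (h₀ : σ₀ ≠ 0) (h : σ₁ + σ₀ ≠ 0) (c μ₁ μ₀ : ℝ) :
    regret σ₁ σ₀ (σ₁ / (σ₁ + σ₀)) c μ₁ μ₀ =
      if μ₀ ≤ μ₁ then (μ₁ - μ₀) * stdNormalCDF (c - (μ₁ - μ₀) / (σ₁ + σ₀))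
      else (μ₀ - μ₁) * stdNormalCDF (-c - (μ₀ - μ₁) / (σ₁ + σ₀)) := by
  unfold regret
  rw [neyman_drift h₁ h₀ h]
  split_ifs <;> ring_nf

lemma setOf_exists_ite_sub_eq {f g : ℝ → ℝ} (hf : f 0 = 0) :
    {r | ∃ x y : ℝ, r = if y ≤ x then f (x - y) else g (y - x)} =
      insert 0 (f '' Ioi 0 ∪ g '' Ioi 0) := by
  ext r
  simp only [mem_ofPred_eq, mem_insert_iff, mem_union, mem_image, mem_Ioi]
  constructor
  · rintro ⟨x, y, rfl⟩
    split_ifs with hyx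
    · rcases hyx.eq_or_lt with rfl | hlt
      · simp [hf]
      · exact Or.inr (Or.inl ⟨x - y, sub_pos.2 hlt, rfl⟩)
    · exact Or.inr (Or.inr ⟨y - x, sub_pos.2 (not_le.1 hyx), rfl⟩)
  · rintro (rfl | ⟨δ, hδ, rfl⟩ | ⟨δ, hδ, rfl⟩)
    · exact ⟨0, 0, by simp [hf]⟩
    · exact ⟨δ, 0, by simp [hδ.le]⟩
    · exact ⟨0, δ, by simp [hδ]⟩

lemma csSup_insert_zero_union {A B : Set ℝ} (hA : BddAbove A) (hB : BddAbove B)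
    (hA₀ : ∃ a ∈ A, 0 ≤ a) (hB' : B.Nonempty) :
    sSup (insert 0 (A ∪ B)) = max (sSup A) (sSup B) := by
  obtain ⟨a, ha, ha₀⟩ := hA₀
  rw [csSup_insert (hA.union hB) ⟨a, Or.inl ha⟩, csSup_union hA ⟨a, ha⟩ hB hB']
  exact max_eq_right (ha₀.trans ((le_csSup hA ha).trans (le_max_left _ _)))

lemma stdNormalCDF_nonneg (x : ℝ) : 0 ≤ stdNormalCDF x :=
  setIntegral_nonneg measurableSet_Iic fun _ _ => by positivity

lemma integrable_exp_neg_sub_sq_div_two : Integrable fun t : ℝ => exp (-t - t ^ 2 / 2) := by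
  refine (((integrable_exp_neg_mul_sq (b := 1 / 2) (by norm_num)).comp_add_right 1).const_mul
    (exp (1 / 2))).congr (ae_of_all _ fun t => ?_)
  simp only [← exp_add]
  ring_nf

/-- Chernoff bound: on `t ≤ x` the Gaussian density is at most `eˣ e⁻ᵗ` times itself. -/
lemma exists_stdNormalCDF_le_mul_exp : ∃ C, 0 ≤ C ∧ ∀ x, stdNormalCDF x ≤ C * exp x := by
  have htilt := integrable_exp_neg_sub_sq_div_two.const_mul (√(2 * π))⁻¹
  refine ⟨∫ t, (√(2 * π))⁻¹ * exp (-t - t ^ 2 / 2), integral_nonneg fun _ => by positivity,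
    fun x => ?_⟩
  calc stdNormalCDF x
      ≤ ∫ t in Iic x, exp x * ((√(2 * π))⁻¹ * exp (-t - t ^ 2 / 2)) := by
        refine integral_mono_of_nonneg (ae_of_all _ fun _ => by positivity)
          (htilt.const_mul _).integrableOn (ae_restrict_of_forall_mem measurableSet_Iic ?_)
        intro t (ht : t ≤ x)
        dsimp only
        rw [mul_left_comm, ← exp_add]
        gcongr
        linarith
    _ ≤ ∫ t, exp x * ((√(2 * π))⁻¹ * exp (-t - t ^ 2 / 2)) :=
        setIntegral_le_integral (htilt.const_mul _) (ae_of_all _ fun _ => by positivity)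
    _ = _ := by rw [integral_const_mul, mul_comm]

lemma bddAbove_mul_stdNormalCDF_sub_div (a : ℝ) {s : ℝ} (hs : 0 < s) :
    BddAbove ((fun δ => δ * stdNormalCDF (a - δ / s)) '' Ioi 0) := by
  obtain ⟨C, hC₀, hC⟩ := exists_stdNormalCDF_le_mul_exp
  refine ⟨C * exp a * s * exp (-1), ?_⟩
  rintro _ ⟨δ, hδ, rfl⟩
  calc δ * stdNormalCDF (a - δ / s)
      ≤ δ * (C * exp (a - δ / s)) := mul_le_mul_of_nonneg_left (hC _) (le_of_lt hδ)
    _ = C * exp a * s * (δ / s * exp (-(δ / s))) := by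
        rw [sub_eq_add_neg, exp_add]
        field_simp
    _ ≤ C * exp a * s * exp (-1) := by
        gcongr
        exact mul_exp_neg_le_exp_neg_one _

/-- With the Neyman allocation `γ* = σ₁/(σ₁+σ₀)`, the drift simplifies to
`(μ₁ − μ₀)/(σ₁ + σ₀)`, and for every `c` the worst-case regret equals
`max{ sup_{δ>0} δΦ(c − δ/(σ₁+σ₀)), sup_{δ>0} δΦ(−c − δ/(σ₁+σ₀)) }`. -/
theorem neyman_worst_case_regret (σ₁ σ₀ : ℝ) (hσ₁ : 0 < σ₁) (hσ₀ : 0 < σ₀) :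
    (∀ μ₁ μ₀ : ℝ,
      μ₁ * (σ₁ / (σ₁ + σ₀)) / σ₁ - μ₀ * (1 - σ₁ / (σ₁ + σ₀)) / σ₀ =
        (μ₁ - μ₀) / (σ₁ + σ₀)) ∧
    ∀ c : ℝ,
      sSup {r : ℝ | ∃ μ₁ μ₀ : ℝ, r = regret σ₁ σ₀ (σ₁ / (σ₁ + σ₀)) c μ₁ μ₀} =
      max (sSup ((fun δ : ℝ => δ * stdNormalCDF (c - δ / (σ₁ + σ₀))) '' Set.Ioi 0))
          (sSup ((fun δ : ℝ => δ * stdNormalCDF (-c - δ / (σ₁ + σ₀))) '' Set.Ioi 0)) := by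
  have hs : 0 < σ₁ + σ₀ := add_pos hσ₁ hσ₀
  refine ⟨neyman_drift hσ₁.ne' hσ₀.ne' hs.ne', fun c => ?_⟩
  simp_rw [regret_neyman hσ₁.ne' hσ₀.ne' hs.ne']
  rw [setOf_exists_ite_sub_eq (f := fun δ => δ * stdNormalCDF (c - δ / (σ₁ + σ₀)))
    (g := fun δ => δ * stdNormalCDF (-c - δ / (σ₁ + σ₀))) (zero_mul _)]
  exact csSup_insert_zero_union (bddAbove_mul_stdNormalCDF_sub_div c hs)
    (bddAbove_mul_stdNormalCDF_sub_div (-c) hs)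
    ⟨_, mem_image_of_mem _ (mem_Ioi.2 one_pos), mul_nonneg zero_le_one (stdNormalCDF_nonneg _)⟩
    (nonempty_Ioi.image _)
end

section
/- Let σ₁, σ₀ > 0, let δ* be the unique maximizer of δ ↦ δ·Φ(−δ) over (0, ∞), and set γ* = σ₁/(σ₁+σ₀), V* = (σ₁+σ₀)·δ*·Φ(−δ*). Then for (μ₁, μ₀) ∈ ℝ² with μ₁ ≠ μ₀, the regret R(γ*, 0, μ₁, μ₀) = |μ₁ − μ₀|·Φ(−|μ₁ − μ₀|/(σ₁+σ₀)) satisfies R(γ*, 0, μ₁, μ₀) ≤ V*, with equality if and only if |μ₁ − μ₀| = (σ₁ + σ₀)·δ*. -/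
/-- With `δ*` the unique maximizer of `δ·Φ(−δ)` on `(0,∞)`, `γ* = σ₁/(σ₁+σ₀)` and
`V* = (σ₁+σ₀)·δ*·Φ(−δ*)`: for `μ₁ ≠ μ₀`, the regret
`R(γ*, 0, μ₁, μ₀) = |μ₁−μ₀|·Φ(−|μ₁−μ₀|/(σ₁+σ₀))` satisfies `R ≤ V*`, with equality iff
`|μ₁ − μ₀| = (σ₁+σ₀)·δ*`. -/
theorem nature_best_response_to_neyman (σ₁ σ₀ d : ℝ)
    (hσ₁ : 0 < σ₁) (hσ₀ : 0 < σ₀) (hd : 0 < d)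
    (hmax : IsMaxOn (fun δ : ℝ => δ * stdNormalCDF (-δ)) (Set.Ioi 0) d)
    (huniq : ∀ d' : ℝ, 0 < d' →
      IsMaxOn (fun δ : ℝ => δ * stdNormalCDF (-δ)) (Set.Ioi 0) d' → d' = d)
    (μ₁ μ₀ : ℝ) (hne : μ₁ ≠ μ₀) :
    regret σ₁ σ₀ (σ₁ / (σ₁ + σ₀)) 0 μ₁ μ₀ =
      |μ₁ - μ₀| * stdNormalCDF (-(|μ₁ - μ₀| / (σ₁ + σ₀))) ∧
    |μ₁ - μ₀| * stdNormalCDF (-(|μ₁ - μ₀| / (σ₁ + σ₀))) ≤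
      (σ₁ + σ₀) * (d * stdNormalCDF (-d)) ∧
    (|μ₁ - μ₀| * stdNormalCDF (-(|μ₁ - μ₀| / (σ₁ + σ₀))) =
        (σ₁ + σ₀) * (d * stdNormalCDF (-d)) ↔
      |μ₁ - μ₀| = (σ₁ + σ₀) * d) := by
  have hs : 0 < σ₁ + σ₀ := by linarith
  set s := σ₁ + σ₀ with hsdef
  have hane : μ₁ - μ₀ ≠ 0 := sub_ne_zero.mpr hne
  have habs : 0 < |μ₁ - μ₀| := abs_pos.mpr hane
  set δ := |μ₁ - μ₀| / s with hδdef
  have hδpos : 0 < δ := div_pos habs hs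
  have hkey : μ₁ * (σ₁ / s) / σ₁ - μ₀ * (1 - σ₁ / s) / σ₀ = (μ₁ - μ₀) / s := by
    have h1 : 1 - σ₁ / s = σ₀ / s := by field_simp; ring
    rw [h1]
    field_simp
  have hreg : regret σ₁ σ₀ (σ₁ / s) 0 μ₁ μ₀ =
      |μ₁ - μ₀| * stdNormalCDF (-δ) := by
    unfold regret
    rw [hkey]
    rcases le_or_gt μ₀ μ₁ with h | h
    · rw [if_pos h]
      have : |μ₁ - μ₀| = μ₁ - μ₀ := abs_of_nonneg (by linarith)
      rw [this, hδdef, this]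
      ring_nf
    · rw [if_neg (not_le.mpr h)]
      have : |μ₁ - μ₀| = μ₀ - μ₁ := by rw [abs_sub_comm]; exact abs_of_nonneg (by linarith)
      rw [this, hδdef, this]
      congr 1
      ring
  have hscale : |μ₁ - μ₀| * stdNormalCDF (-δ) = s * (δ * stdNormalCDF (-δ)) := by
    rw [hδdef]; field_simp
  have hle : δ * stdNormalCDF (-δ) ≤ d * stdNormalCDF (-d) := hmax hδpos
  refine ⟨hreg, ?_, ?_⟩
  · rw [hscale]
    exact mul_le_mul_of_nonneg_left hle hs.le
  · constructor
    · intro heq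
      rw [hscale] at heq
      have heq' : δ * stdNormalCDF (-δ) = d * stdNormalCDF (-d) :=
        mul_left_cancel₀ hs.ne' heq
      have : δ = d := by
        apply huniq δ hδpos
        intro x hx
        simp only [Set.mem_setOf_eq]
        calc (fun δ : ℝ => δ * stdNormalCDF (-δ)) x ≤ d * stdNormalCDF (-d) := hmax hx
          _ = δ * stdNormalCDF (-δ) := heq'.symm
      rw [hδdef] at this
      field_simp at this
      linarith [this]
    · intro heq
      have : δ = d := by rw [hδdef, heq]; field_simp
      rw [hscale, this]
end
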